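/- Let G = (X, +, ≤) be an ordered group and let inc(0) be the set of elements of X incomparable to 0. The following are equivalent: (i) the order of G is a weak order; (ii) inc(0) is an antichain of (X, ≤); (iii) H := inc(0) ∪ {0} is a subgroup of G. Moreover, if these conditions hold, then H is a normal subgroup of G, each coset of H is an antichain and an autonomous subset of (X, ≤), the quotient group G/H carries a compatible total order (x + H < y + H iff x < y for some, equivalently all, representatives), and the order on G is the lexicographical sum of copies of H indexed by the chain G/H: for x, y in distinct cosets, x < y iff x + H < y + H. -/

import Mathlib

/-!
By left-invariance, `-x + y ∈ H` holds exactly when `x` and `y` are equal or incomparable.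
Hence `H` is closed under addition precisely when "equal or incomparable" is transitive, which
for a partial order means that `1 ⊕ 2` does not embed. In a weak order the classes of this
equivalence relation are antichains, and any element outside a class is strictly above or
strictly below the whole class; this gives autonomy and the lexicographic description.
-/

namespace ThrPaper

universe u

variable {X : Type*}

/-- The strict order associated to a reflexive relation `le`. -/
def Lt (le : X → X → Prop) (x y : X) : Prop := le x y ∧ ¬ le y x

/-- `x` and `y` are incomparable with respect to `le`. -/
def Incomp (le : X → X → Prop) (x y : X) : Prop := ¬ le x y ∧ ¬ le y x

/-- `le` is a partial order (reflexive, transitive, antisymmetric). -/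
def IsPartialOrderRel (le : X → X → Prop) : Prop :=
  (∀ x, le x x) ∧ (∀ x y z, le x y → le y z → le x z) ∧ ∀ x y, le x y → le y x → x = y

/-- `le` is total. -/
def IsTotalRel (le : X → X → Prop) : Prop := ∀ x y, le x y ∨ le y x

/-- Compatibility of a relation with the (not necessarily abelian) group operation. -/
def IsCompat {G : Type*} [AddGroup G] (le : G → G → Prop) : Prop :=
  ∀ a b x y : G, le x y → le (a + x + b) (a + y + b)

/-- The trace quasi-order `≤_pred`: `x ≤_pred y` iff every `z < x` satisfies `z < y`. -/
def PredLe (le : X → X → Prop) (x y : X) : Prop := ∀ z, Lt le z x → Lt le z y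

/-- The trace quasi-order `≤_succ`: `x ≤_succ y` iff every `z > y` satisfies `z > x`. -/
def SuccLe (le : X → X → Prop) (x y : X) : Prop := ∀ z, Lt le y z → Lt le x z

/-- `le` is a threshold order: `≤_pred` and `≤_succ` are equal and are total orders. -/
def IsThresholdOrder (le : X → X → Prop) : Prop :=
  (∀ x y, PredLe le x y ↔ SuccLe le x y) ∧
  (∀ x y, PredLe le x y ∨ PredLe le y x) ∧
  ∀ x y, PredLe le x y → PredLe le y x → x = y

/-- The poset `2 ⊕ 2` embeds into `le`. -/
def Embeds2p2 (le : X → X → Prop) : Prop :=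
  ∃ a b c d : X, Lt le a b ∧ Lt le c d ∧
    Incomp le a c ∧ Incomp le a d ∧ Incomp le b c ∧ Incomp le b d

/-- The poset `3 ⊕ 1` embeds into `le`. -/
def Embeds3p1 (le : X → X → Prop) : Prop :=
  ∃ a b c d : X, Lt le a b ∧ Lt le b c ∧ Incomp le d a ∧ Incomp le d b ∧ Incomp le d c

/-- The poset `1 ⊕ 2` embeds into `le`. -/
def Embeds1p2 (le : X → X → Prop) : Prop :=
  ∃ a b c : X, Lt le a b ∧ Incomp le c a ∧ Incomp le c b

def EqOrIncomp (le : X → X → Prop) (x y : X) : Prop := x = y ∨ Incomp le x y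

section Poset

variable {le : X → X → Prop} {x x' y y' z : X}

theorem Incomp.symm (h : Incomp le x y) : Incomp le y x := And.symm h

theorem EqOrIncomp.symm (h : EqOrIncomp le x y) : EqOrIncomp le y x :=
  h.imp Eq.symm Incomp.symm

theorem Lt.ne (h : Lt le x y) : x ≠ y := by
  rintro rfl
  exact h.2 h.1

theorem not_eqOrIncomp_iff (hpo : IsPartialOrderRel le) :
    ¬EqOrIncomp le x y ↔ Lt le x y ∨ Lt le y x := by
  constructor
  · intro h
    by_cases hxy : le x y
    · exact Or.inl ⟨hxy, fun hyx => h (Or.inl (hpo.2.2 x y hxy hyx))⟩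
    by_cases hyx : le y x
    · exact Or.inr ⟨hyx, hxy⟩
    · exact absurd (Or.inr ⟨hxy, hyx⟩) h
  · rintro (hlt | hlt) (rfl | hinc)
    · exact hlt.ne rfl
    · exact hinc.1 hlt.1
    · exact hlt.ne rfl
    · exact hinc.2 hlt.1

theorem not_embeds1p2_iff_isTrans (hpo : IsPartialOrderRel le) :
    ¬Embeds1p2 le ↔ IsTrans _ (EqOrIncomp le) := by
  constructor
  · refine fun hw => ⟨fun x y z hxy hyz => ?_⟩
    by_contra hxz
    rcases hxy with rfl | hxy
    · exact hxz hyz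
    rcases hyz with rfl | hyz
    · exact hxz (Or.inr hxy)
    rcases (not_eqOrIncomp_iff hpo).1 hxz with hlt | hlt
    · exact hw ⟨x, z, y, hlt, hxy.symm, hyz⟩
    · exact hw ⟨z, x, y, hlt, hyz, hxy.symm⟩
  · rintro htr ⟨a, b, c, hab, hca, hcb⟩
    exact (not_eqOrIncomp_iff hpo).2 (Or.inl hab)
      (htr.trans _ _ _ (Or.inr hca.symm) (Or.inr hcb))

theorem EqOrIncomp.le_of_le (hpo : IsPartialOrderRel le) (hxy : EqOrIncomp le x y)
    (hyz : ¬EqOrIncomp le y z) (hzx : le z x) : le z y := by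
  rcases hxy with rfl | hxy
  · exact hzx
  rcases (not_eqOrIncomp_iff hpo).1 hyz with hlt | hlt
  · exact absurd (hpo.2.1 _ _ _ hlt.1 hzx) hxy.2
  · exact hlt.1

theorem EqOrIncomp.le_of_ge (hpo : IsPartialOrderRel le) (hxy : EqOrIncomp le x y)
    (hyz : ¬EqOrIncomp le y z) (hxz : le x z) : le y z := by
  rcases hxy with rfl | hxy
  · exact hxz
  rcases (not_eqOrIncomp_iff hpo).1 hyz with hlt | hlt
  · exact hlt.1
  · exact absurd (hpo.2.1 _ _ _ hxz hlt.1) hxy.1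

theorem EqOrIncomp.le_iff_le (hpo : IsPartialOrderRel le) (htr : IsTrans _ (EqOrIncomp le))
    (hxy : EqOrIncomp le x y) (hxz : ¬EqOrIncomp le x z) :
    (le z x ↔ le z y) ∧ (le x z ↔ le y z) := by
  have hyz : ¬EqOrIncomp le y z := fun h => hxz (htr.trans _ _ _ hxy h)
  exact ⟨⟨hxy.le_of_le hpo hyz, hxy.symm.le_of_le hpo hxz⟩,
    ⟨hxy.le_of_ge hpo hyz, hxy.symm.le_of_ge hpo hxz⟩⟩

theorem EqOrIncomp.lt_iff_lt (hpo : IsPartialOrderRel le) (htr : IsTrans _ (EqOrIncomp le))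
    (hx : EqOrIncomp le x x') (hy : EqOrIncomp le y y') (hxy : ¬EqOrIncomp le x y) :
    Lt le x y ↔ Lt le x' y' := by
  have hyx' : ¬EqOrIncomp le y x' := fun h => hxy (htr.trans _ _ _ hx h.symm)
  obtain ⟨hyx, hxy⟩ := hx.le_iff_le hpo htr hxy
  obtain ⟨hx'y, hy'x'⟩ := hy.le_iff_le hpo htr hyx'
  rw [Lt, Lt, hxy, hx'y, hyx, hy'x']

end Poset

section Group

variable {G : Type*} [AddGroup G] {le : G → G → Prop} {H : Set G} {x y z : G}

theorem IsCompat.le_add_add_iff (hc : IsCompat le) (a b : G) :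
    le (a + x + b) (a + y + b) ↔ le x y :=
  ⟨fun h => by simpa [add_assoc] using hc (-a) (-b) _ _ h, hc a b x y⟩

theorem IsCompat.lt_add_add_iff (hc : IsCompat le) (a b : G) :
    Lt le (a + x + b) (a + y + b) ↔ Lt le x y := by
  simp only [Lt, hc.le_add_add_iff]

theorem IsCompat.incomp_add_add_iff (hc : IsCompat le) (a b : G) :
    Incomp le (a + x + b) (a + y + b) ↔ Incomp le x y := by
  simp only [Incomp, hc.le_add_add_iff]

theorem IsCompat.eqOrIncomp_add_add_iff (hc : IsCompat le) (a b : G) :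
    EqOrIncomp le (a + x + b) (a + y + b) ↔ EqOrIncomp le x y := by
  simp only [EqOrIncomp, hc.incomp_add_add_iff, add_left_inj, add_right_inj]

theorem mem_iff_eqOrIncomp_zero (hH : H = {x : G | Incomp le x 0} ∪ {0}) :
    z ∈ H ↔ EqOrIncomp le 0 z := by
  subst hH
  simp [EqOrIncomp, Incomp, eq_comm, and_comm]

theorem neg_add_mem_iff (hc : IsCompat le) (hH : H = {x : G | Incomp le x 0} ∪ {0}) :
    -x + y ∈ H ↔ EqOrIncomp le x y := by
  rw [mem_iff_eqOrIncomp_zero hH, ← hc.eqOrIncomp_add_add_iff x 0]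
  simp

theorem neg_mem_of_mem (hc : IsCompat le) (hH : H = {x : G | Incomp le x 0} ∪ {0})
    (hz : z ∈ H) : -z ∈ H := by
  have h0z : EqOrIncomp le 0 z := (mem_iff_eqOrIncomp_zero hH).1 hz
  simpa using (neg_add_mem_iff hc hH).2 h0z.symm

theorem neg_add_add_mem (hc : IsCompat le) (hH : H = {x : G | Incomp le x 0} ∪ {0})
    (hx : x ∈ H) (g : G) : -g + x + g ∈ H := by
  rw [mem_iff_eqOrIncomp_zero hH] at hx ⊢
  simpa using (hc.eqOrIncomp_add_add_iff (-g) g).2 hx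

theorem add_mem_iff_isTrans (hc : IsCompat le) (hH : H = {x : G | Incomp le x 0} ∪ {0}) :
    (∀ x ∈ H, ∀ y ∈ H, x + y ∈ H) ↔ IsTrans _ (EqOrIncomp le) := by
  constructor
  · refine fun hadd => ⟨fun x y z hxy hyz => ?_⟩
    rw [← neg_add_mem_iff hc hH] at hxy hyz ⊢
    simpa [add_assoc] using hadd _ hxy _ hyz
  · intro htr x hx y hy
    have hxy : EqOrIncomp le x (x + y) := (neg_add_mem_iff hc hH).1 (by simpa using hy)
    rw [mem_iff_eqOrIncomp_zero hH] at hx ⊢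
    exact htr.trans _ _ _ hx hxy

theorem not_embeds1p2_iff_incomp_zero_antichain (hpo : IsPartialOrderRel le) (hc : IsCompat le) :
    ¬Embeds1p2 le ↔ ∀ x ∈ {x : G | Incomp le x 0}, ∀ y ∈ {x : G | Incomp le x 0},
      x ≠ y → Incomp le x y := by
  refine ⟨fun hw x hx y hy hxy => ?_, fun h => ?_⟩
  · have htr := (not_embeds1p2_iff_isTrans hpo).1 hw
    exact (htr.trans _ _ _ (Or.inr hx) (Or.inr hy.symm)).resolve_left hxy
  · rintro ⟨a, b, c, hab, hca, hcb⟩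
    have translate {x : G} (hx : Incomp le c x) : Incomp le (-c + x) 0 := by
      simpa using ((hc.incomp_add_add_iff (-c) 0).2 hx).symm
    refine (h _ (translate hca) _ (translate hcb) (by simpa using hab.ne)).1 ?_
    simpa using (hc.le_add_add_iff (-c) 0).2 hab.1

theorem not_embeds1p2_iff_addSubgroup (hpo : IsPartialOrderRel le) (hc : IsCompat le)
    (hH : H = {x : G | Incomp le x 0} ∪ {0}) :
    ¬Embeds1p2 le ↔ ((0 : G) ∈ H ∧ (∀ x ∈ H, -x ∈ H) ∧ ∀ x ∈ H, ∀ y ∈ H, x + y ∈ H) := by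
  rw [not_embeds1p2_iff_isTrans hpo, ← add_mem_iff_isTrans hc hH]
  refine ⟨fun hadd => ⟨?_, fun x => neg_mem_of_mem hc hH, hadd⟩, fun h => h.2.2⟩
  simp [hH]

end Group

/-- For an ordered group `G` with `H := inc(0) ∪ {0}`:
(i) the order is a weak order, (ii) `inc(0)` is an antichain, and (iii) `H` is a subgroup,
are equivalent; and when they hold, `H` is a normal subgroup, its cosets are antichains
and autonomous, the quotient is totally ordered and `G` is the lexicographical sum of the
cosets of `H`. -/
theorem weakOrder_orderedGroup {G : Type*} [AddGroup G] (le : G → G → Prop)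
    (hpo : IsPartialOrderRel le) (hc : IsCompat le)
    (H : Set G) (hH : H = {x : G | Incomp le x 0} ∪ {0}) :
    ((¬ Embeds1p2 le) ↔
      (∀ x ∈ {x : G | Incomp le x 0}, ∀ y ∈ {x : G | Incomp le x 0},
        x ≠ y → Incomp le x y)) ∧
    ((¬ Embeds1p2 le) ↔
      ((0 : G) ∈ H ∧ (∀ x ∈ H, -x ∈ H) ∧ ∀ x ∈ H, ∀ y ∈ H, x + y ∈ H)) ∧
    (¬ Embeds1p2 le →
      -- `H` is a normal subgroup of `G`
      ((∀ x ∈ H, ∀ g : G, -g + x + g ∈ H) ∧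
      -- each coset of `H` is an antichain
      (∀ x y : G, -x + y ∈ H → x ≠ y → Incomp le x y) ∧
      -- each coset of `H` is an autonomous subset
      (∀ x y z : G, -x + y ∈ H → -x + z ∉ H →
        ((le z x ↔ le z y) ∧ (le x z ↔ le y z))) ∧
      -- distinct cosets are comparable: the quotient order is total
      (∀ x y : G, -x + y ∉ H → (Lt le x y ∨ Lt le y x)) ∧
      -- the quotient order is well defined and `G` is the lexicographical sum of the
      -- cosets: for `x, y` in distinct cosets, `x < y` iff `x + H < y + H`
      (∀ x x' y y' : G, -x + x' ∈ H → -y + y' ∈ H → -x + y ∉ H →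
        (Lt le x y ↔ Lt le x' y')) ∧
      -- the quotient order is compatible with the group operation
      (∀ a b x y : G, -x + y ∉ H → Lt le x y → Lt le (a + x + b) (a + y + b)))) := by
  have hcos {x y : G} : -x + y ∈ H ↔ EqOrIncomp le x y := neg_add_mem_iff hc hH
  refine ⟨not_embeds1p2_iff_incomp_zero_antichain hpo hc,
    not_embeds1p2_iff_addSubgroup hpo hc hH, fun hw => ?_⟩
  have htr := (not_embeds1p2_iff_isTrans hpo).1 hw
  simp only [hcos]
  exact ⟨fun x hx g => neg_add_add_mem hc hH hx g,
    fun x y hxy hne => hxy.resolve_left hne,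
    fun x y z hxy hxz => hxy.le_iff_le hpo htr hxz,
    fun x y hxy => (not_eqOrIncomp_iff hpo).1 hxy,
    fun x x' y y' hx hy hxy => hx.lt_iff_lt hpo htr hy hxy,
    fun a b x y _ hlt => (hc.lt_add_add_iff a b).2 hlt⟩

end ThrPaper
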